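/- arXiv:0709.2245 — 6 statements merged into one kernel-verified Lean document; each statement's English description precedes it below -/
import Mathlib

section
/- Let C₁,…,C_N be closed convex subsets of ℝ^d with c ∈ ⋂_j C_j, and let β ∈ ℬ with s = ∑_{k=1}^N β_k ≤ 2. Then for every x ∈ ℝ^d: ‖Q_β(x) - c‖² ≤ ‖x - c‖² - (2 - s) ∑_{j=1}^N β_j ‖x - P_{C_j}(x)‖². -/
open scoped RealInnerProductSpace
set_option maxHeartbeats 1000000


/-- Bauschke–Borwein estimate:
`‖Q_β x - c‖² ≤ ‖x - c‖² - (2 - s) ∑ β_j ‖x - P_j x‖²` where `s = ∑ β_j ≤ 2`. -/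
theorem stmt_5 {d N : ℕ}
    (C : Fin N → Set (EuclideanSpace ℝ (Fin d)))
    (hCconv : ∀ j, Convex ℝ (C j)) (hCcl : ∀ j, IsClosed (C j))
    (P : Fin N → EuclideanSpace ℝ (Fin d) → EuclideanSpace ℝ (Fin d))
    (hP : ∀ j x, P j x ∈ C j ∧ ∀ y ∈ C j, ‖x - P j x‖ ≤ ‖x - y‖)
    (c : EuclideanSpace ℝ (Fin d)) (hc : ∀ j, c ∈ C j)
    (β : Fin N → ℝ) (hβ0 : ∀ j, 0 ≤ β j) (hβ2 : ∑ j, β j ≤ 2)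
    (x : EuclideanSpace ℝ (Fin d)) :
    ‖(x - ∑ j, β j • (x - P j x)) - c‖ ^ 2 ≤
      ‖x - c‖ ^ 2 - (2 - ∑ k, β k) * ∑ j, β j * ‖x - P j x‖ ^ 2 := by
  set v : Fin N → EuclideanSpace ℝ (Fin d) := fun j => x - P j x with hv
  set u : EuclideanSpace ℝ (Fin d) := ∑ j, β j • v j with hu
  -- projection characterization
  have hproj : ∀ j, ⟪v j, c - P j x⟫ ≤ 0 := by
    intro j
    have heq : ‖x - P j x‖ = ⨅ w : C j, ‖x - w‖ := by
      have hne : Nonempty (C j) := ⟨⟨P j x, (hP j x).1⟩⟩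
      refine le_antisymm (le_ciInf fun w => (hP j x).2 w w.2) ?_
      have hbdd : BddBelow (Set.range fun w : C j => ‖x - w‖) :=
        ⟨0, by rintro _ ⟨w, rfl⟩; exact norm_nonneg _⟩
      exact ciInf_le hbdd ⟨P j x, (hP j x).1⟩
    exact (norm_eq_iInf_iff_real_inner_le_zero (hCconv j) (hP j x).1).1 heq c (hc j)
  -- each ⟪x - c, v j⟫ ≥ ‖v j‖²
  have hinner : ∀ j, ‖v j‖ ^ 2 ≤ ⟪x - c, v j⟫ := by
    intro j
    have h1 : ⟪x - c, v j⟫ = ⟪v j, v j⟫ - ⟪v j, c - P j x⟫ := by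
      rw [real_inner_comm]
      have : x - c = v j - (c - P j x) := by simp [hv]
      rw [this, inner_sub_right]
    rw [h1, real_inner_self_eq_norm_sq]
    linarith [hproj j]
  have hA : ∑ j, β j * ‖v j‖ ^ 2 ≤ ⟪x - c, u⟫ := by
    rw [hu, inner_sum]
    refine Finset.sum_le_sum fun j _ => ?_
    rw [real_inner_smul_right]
    exact mul_le_mul_of_nonneg_left (hinner j) (hβ0 j)
  -- ‖u‖² ≤ s * ∑ β j ‖v j‖²
  have hB : ‖u‖ ^ 2 ≤ (∑ k, β k) * ∑ j, β j * ‖v j‖ ^ 2 := by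
    have h1 : ‖u‖ ≤ ∑ j, β j * ‖v j‖ := by
      refine (norm_sum_le _ _).trans (le_of_eq ?_)
      refine Finset.sum_congr rfl fun j _ => ?_
      rw [norm_smul, Real.norm_eq_abs, abs_of_nonneg (hβ0 j)]
    have h2 : ‖u‖ ^ 2 ≤ (∑ j, β j * ‖v j‖) ^ 2 := by
      have : (0:ℝ) ≤ ∑ j, β j * ‖v j‖ :=
        Finset.sum_nonneg fun j _ => mul_nonneg (hβ0 j) (norm_nonneg (v j))
      nlinarith [norm_nonneg u]
    refine h2.trans ?_
    have h3 : (∑ j, Real.sqrt (β j) * (Real.sqrt (β j) * ‖v j‖)) ^ 2 ≤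
        (∑ j, Real.sqrt (β j) ^ 2) * ∑ j, (Real.sqrt (β j) * ‖v j‖) ^ 2 :=
      Finset.sum_mul_sq_le_sq_mul_sq _ _ _
    have e1 : ∀ j : Fin N, Real.sqrt (β j) * (Real.sqrt (β j) * ‖v j‖) = β j * ‖v j‖ := by
      intro j; rw [← mul_assoc, Real.mul_self_sqrt (hβ0 j)]
    have e2 : ∀ j : Fin N, Real.sqrt (β j) ^ 2 = β j := fun j => Real.sq_sqrt (hβ0 j)
    have e3 : ∀ j : Fin N, (Real.sqrt (β j) * ‖v j‖) ^ 2 = β j * ‖v j‖ ^ 2 := by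
      intro j; rw [mul_pow, e2]
    simp only [e1, e2, e3] at h3
    exact h3
  have key : ‖(x - c) - u‖ ^ 2 = ‖x - c‖ ^ 2 - 2 * ⟪x - c, u⟫ + ‖u‖ ^ 2 := by
    rw [norm_sub_sq_real]
  have hrw : (x - u) - c = (x - c) - u := by abel
  rw [hrw, key]
  linarith [hA, hB]
end

section
/- Let C₁,…,C_N be closed convex subsets of ℝ^d with nonempty intersection C, let β ∈ ℬ with s = ∑_k β_k ≤ 2, fix an index i with β_i > 0 and s - β_i < 2, and set ν_i = 2β_i(2 - s)/(β_i + 2 - s). Then for every x ∈ ℝ^d and c ∈ C: ‖Q_β(x) - c‖² ≤ ‖x - c‖² - ν_i · d(x, C_i)², where d(x, C_i) is the distance from x to C_i. -/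
open Finset
open scoped RealInnerProductSpace


/-- One-index estimate: for `β ∈ ℬ`, `s = ∑ β_k ≤ 2`, an index `i` with
`β_i > 0` and `s - β_i < 2`, and `ν_i = 2β_i(2-s)/(β_i + 2 - s)`:
`‖Q_β x - c‖² ≤ ‖x - c‖² - ν_i d(x, C_i)²`. -/
theorem stmt_6 {d N : ℕ}
    (C : Fin N → Set (EuclideanSpace ℝ (Fin d)))
    (hCconv : ∀ j, Convex ℝ (C j)) (hCcl : ∀ j, IsClosed (C j))
    (P : Fin N → EuclideanSpace ℝ (Fin d) → EuclideanSpace ℝ (Fin d))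
    (hP : ∀ j x, P j x ∈ C j ∧ ∀ y ∈ C j, ‖x - P j x‖ ≤ ‖x - y‖)
    (c : EuclideanSpace ℝ (Fin d)) (hc : ∀ j, c ∈ C j)
    (β : Fin N → ℝ) (hβ0 : ∀ j, 0 ≤ β j) (hβ2 : ∑ k, β k ≤ 2)
    (i : Fin N) (hi : 0 < β i) (hi2 : (∑ k, β k) - β i < 2)
    (x : EuclideanSpace ℝ (Fin d)) :
    ‖(x - ∑ j, β j • (x - P j x)) - c‖ ^ 2 ≤
      ‖x - c‖ ^ 2 -
        (2 * β i * (2 - ∑ k, β k) / (β i + 2 - ∑ k, β k)) *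
          (Metric.infDist x (C i)) ^ 2 := by
  set s : ℝ := ∑ k, β k with hs
  set e : Fin N → EuclideanSpace ℝ (Fin d) := fun j => x - P j x with he
  set n : Fin N → ℝ := fun j => ‖e j‖ with hn
  have hn0 : ∀ j, 0 ≤ n j := fun j => norm_nonneg _
  -- distance equals n i
  have hdist : Metric.infDist x (C i) = n i := by
    apply le_antisymm
    · simpa [hn, he, dist_eq_norm] using Metric.infDist_le_dist_of_mem (hP i x).1
    · by_contra hlt
      push_neg at hlt
      obtain ⟨y, hy, hdy⟩ := (Metric.infDist_lt_iff ⟨c, hc i⟩).1 hlt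
      have := (hP i x).2 y hy
      rw [dist_eq_norm] at hdy
      simp only [hn, he] at this hdy
      linarith
  -- projection variational inequality
  have hproj : ∀ j, (n j) ^ 2 ≤ ⟪e j, x - c⟫ := by
    intro j
    haveI : Nonempty (C j) := ⟨⟨c, hc j⟩⟩
    have heq : ‖x - P j x‖ = ⨅ w : C j, ‖x - w‖ := by
      apply le_antisymm
      · exact le_ciInf fun w => (hP j x).2 w w.2
      · exact ciInf_le ⟨0, fun _ ⟨_, h⟩ => h ▸ norm_nonneg _⟩ (⟨P j x, (hP j x).1⟩ : C j)
    have hineq := (norm_eq_iInf_iff_real_inner_le_zero (hCconv j) (hP j x).1).1 heq c (hc j)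
    have : ⟪e j, x - c⟫ = ⟪e j, e j⟫ - ⟪x - P j x, c - P j x⟫ := by
      rw [← inner_sub_right]
      have h2 : e j - (c - P j x) = x - c := by simp only [he]; abel
      rw [h2]
    rw [this, real_inner_self_eq_norm_sq]
    simp only [hn]
    linarith
  set w : EuclideanSpace ℝ (Fin d) := ∑ j, β j • e j with hw
  -- inner product bound
  have hinner : ∑ j, β j * (n j) ^ 2 ≤ ⟪x - c, w⟫ := by
    rw [hw, inner_sum]
    apply Finset.sum_le_sum
    intro j _
    rw [real_inner_smul_right]
    have := hproj j
    rw [real_inner_comm] at this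
    nlinarith [hβ0 j]
  -- weights κ
  set D : ℝ := β i + 2 - s with hD
  have hDpos : 0 < D := by simp only [hD]; linarith
  set κ : Fin N → ℝ := fun j => if j = i then D / 2 else β j / 2 with hκ
  have hκ0 : ∀ j, 0 ≤ κ j := by
    intro j
    simp only [hκ]
    split
    · linarith
    · linarith [hβ0 j]
  have hκsum : ∑ j, κ j = 1 := by
    have h1 : ∑ j, κ j = D / 2 + ∑ j ∈ univ.erase i, β j / 2 := by
      rw [← Finset.add_sum_erase _ κ (mem_univ i)]
      congr 1
      · simp [hκ]
      · apply Finset.sum_congr rfl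
        intro j hj
        simp [hκ, (Finset.mem_erase.1 hj).1]
    have h2 : ∑ j ∈ univ.erase i, β j = s - β i := by
      have := Finset.add_sum_erase univ β (mem_univ i)
      rw [hs]; linarith [this]
    rw [h1, ← Finset.sum_div, h2, hD]; ring
  -- Cauchy–Schwarz: ‖w‖² ≤ ∑ β²n²/κ
  have hCS : ‖w‖ ^ 2 ≤ ∑ j, (β j) ^ 2 * (n j) ^ 2 / κ j := by
    have h1 : ‖w‖ ≤ ∑ j, β j * n j := by
      calc ‖w‖ ≤ ∑ j, ‖β j • e j‖ := norm_sum_le _ _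
        _ = ∑ j, β j * n j := by
            apply Finset.sum_congr rfl
            intro j _
            rw [norm_smul, Real.norm_eq_abs, abs_of_nonneg (hβ0 j)]
    have h2 : (∑ j, β j * n j) ^ 2 ≤ (∑ j, κ j) * ∑ j, (β j) ^ 2 * (n j) ^ 2 / κ j := by
      apply Finset.sum_sq_le_sum_mul_sum_of_sq_eq_mul
      · intro j _; exact hκ0 j
      · intro j _
        exact div_nonneg (mul_nonneg (sq_nonneg _) (sq_nonneg _)) (hκ0 j)
      · intro j _
        rcases eq_or_ne (κ j) 0 with h0 | h0
        · have hβj : β j = 0 := by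
            by_contra hne
            have : j ≠ i := by
              intro h; rw [h] at h0; simp only [hκ, if_pos rfl] at h0; linarith
            simp only [hκ, if_neg this] at h0
            exact hne (by linarith)
          simp [hβj, h0]
        · field_simp
      
    have hSnn : 0 ≤ ∑ j, β j * n j :=
      Finset.sum_nonneg fun j _ => mul_nonneg (hβ0 j) (hn0 j)
    calc ‖w‖ ^ 2 ≤ (∑ j, β j * n j) ^ 2 := by
          apply sq_le_sq' (by linarith [norm_nonneg w]) h1
      _ ≤ _ := by rw [hκsum] at h2; linarith
  -- evaluate the κ-sum
  have hsplit : ∑ j, (β j) ^ 2 * (n j) ^ 2 / κ j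
      = (∑ j ∈ univ.erase i, 2 * β j * (n j) ^ 2) + 2 * (β i) ^ 2 / D * (n i) ^ 2 := by
    rw [← Finset.sum_erase_add _ _ (mem_univ i)]
    congr 1
    · apply Finset.sum_congr rfl
      intro j hj
      have hji : j ≠ i := (Finset.mem_erase.1 hj).1
      simp only [hκ, if_neg hji]
      rcases eq_or_ne (β j) 0 with h0 | h0
      · simp [h0]
      · field_simp
    · simp only [hκ, if_pos rfl]
      field_simp
  have hinner_split : ∑ j, β j * (n j) ^ 2
      = (∑ j ∈ univ.erase i, β j * (n j) ^ 2) + β i * (n i) ^ 2 := by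
    rw [Finset.sum_erase_add _ _ (mem_univ i)]
  -- expand the norm
  have hexp : ‖(x - ∑ j, β j • (x - P j x)) - c‖ ^ 2
      = ‖x - c‖ ^ 2 - 2 * ⟪x - c, w⟫ + ‖w‖ ^ 2 := by
    have : (x - ∑ j, β j • (x - P j x)) - c = (x - c) - w := by
      simp only [hw, he]
      abel
    rw [this, norm_sub_sq_real]
  rw [hexp, hdist]
  have hA : 0 ≤ ∑ j ∈ univ.erase i, β j * (n j) ^ 2 :=
    Finset.sum_nonneg fun j _ => mul_nonneg (hβ0 j) (sq_nonneg _)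
  have key : (2 * β i * (2 - s) / D) = 2 * β i - 2 * (β i) ^ 2 / D := by
    field_simp
    ring
  have hterm : ∑ j ∈ univ.erase i, 2 * β j * (n j) ^ 2
      = 2 * ∑ j ∈ univ.erase i, β j * (n j) ^ 2 := by
    rw [Finset.mul_sum]; apply Finset.sum_congr rfl; intro j _; ring
  nlinarith [hCS, hinner, hsplit, hinner_split, hterm, key, sq_nonneg (n i)]
end

section
/- Let C₁,…,C_N be closed convex subsets of ℝ^d with nonempty intersection C, let β ∈ ℬ, and let I ⊆ {1,…,N} be a set of indices. For each i set ν_i = 2β_i(2 - ∑_k β_k)/(β_i + 2 - ∑_k β_k). Then for every x ∈ ℝ^d and c ∈ C: ‖Q_β(x) - c‖² ≤ ‖x - c‖² - (min_{i∈I} ν_i) · (max_{i∈I} d(x, C_i)²). -/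
open Finset
local notation "⟪" x ", " y "⟫_ℝ" => @inner ℝ _ _ x y

lemma key_scalar {N : ℕ} (β r : Fin N → ℝ) (hβ0 : ∀ j, 0 ≤ β j)
    (hβ2 : ∑ k, β k ≤ 2) (hr : ∀ j, 0 ≤ r j) (i : Fin N) :
    2 * β i * (2 - ∑ k, β k) / (β i + 2 - ∑ k, β k) * r i ^ 2 ≤
      2 * ∑ j, β j * r j ^ 2 - (∑ j, β j * r j) ^ 2 := by
  classical
  set s' : ℝ := ∑ j ∈ univ.erase i, β j with hs'
  set m' : ℝ := ∑ j ∈ univ.erase i, β j * r j with hm'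
  set B : ℝ := ∑ j ∈ univ.erase i, β j * r j ^ 2 with hB
  have hsum : ∑ k, β k = β i + s' := (Finset.add_sum_erase _ _ (mem_univ i)).symm
  have hsum2 : ∑ j, β j * r j = β i * r i + m' := (Finset.add_sum_erase _ _ (mem_univ i)).symm
  have hsum3 : ∑ j, β j * r j ^ 2 = β i * r i ^ 2 + B := (Finset.add_sum_erase _ _ (mem_univ i)).symm
  have hs'0 : 0 ≤ s' := Finset.sum_nonneg fun j _ => hβ0 j
  have hm'0 : 0 ≤ m' := Finset.sum_nonneg fun j _ => mul_nonneg (hβ0 j) (hr j)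
  have hB0 : 0 ≤ B := Finset.sum_nonneg fun j _ => mul_nonneg (hβ0 j) (sq_nonneg _)
  have hCS : m' ^ 2 ≤ s' * B := by
    refine Finset.sum_sq_le_sum_mul_sum_of_sq_eq_mul _ (fun j _ => hβ0 j)
      (fun j _ => mul_nonneg (hβ0 j) (sq_nonneg _)) (fun j _ => by ring)
  have hβi := hβ0 i
  have hri := hr i
  have htot : β i + s' ≤ 2 := by rw [← hsum]; exact hβ2
  rw [hsum, hsum2, hsum3]
  have ht : β i + 2 - (β i + s') = 2 - s' := by ring
  rw [ht]
  rcases eq_or_lt_of_le hs'0 with h0 | hpos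
  · have hm0 : m' = 0 := by nlinarith [hCS, sq_nonneg m']
    rcases eq_or_lt_of_le (by linarith : (0:ℝ) ≤ 2 - s') with ht0 | htpos
    · exfalso; linarith
    · rw [div_mul_eq_mul_div, div_le_iff₀ htpos]
      nlinarith [hB0, sq_nonneg (r i), mul_nonneg hβi hri]
  · rcases eq_or_lt_of_le (by linarith : (0:ℝ) ≤ 2 - s') with ht0 | htpos
    · have hb0 : β i = 0 := by linarith
      rw [hb0]
      simp only [mul_zero, zero_mul, mul_comm, zero_div, zero_mul]
      norm_num
      nlinarith [hCS]
    · rw [div_mul_eq_mul_div, div_le_iff₀ htpos]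
      nlinarith [sq_nonneg ((2 - s') * m' - β i * s' * r i),
        mul_nonneg (mul_nonneg hβi hs'0) (sq_nonneg (r i)),
        mul_pos hpos htpos, mul_nonneg (sub_nonneg.2 hCS) (by linarith : (0:ℝ) ≤ 2 - s'),
        mul_nonneg hβi hri, hB0, hm'0]

/-- Theorem 1: for any nonempty index set `I`,
`‖Q_β x - c‖² ≤ ‖x - c‖² - (min_{i∈I} ν_i) (max_{i∈I} d(x,C_i)²)`. -/
theorem stmt_7 {d N : ℕ}
    (C : Fin N → Set (EuclideanSpace ℝ (Fin d)))
    (hCconv : ∀ j, Convex ℝ (C j)) (hCcl : ∀ j, IsClosed (C j))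
    (P : Fin N → EuclideanSpace ℝ (Fin d) → EuclideanSpace ℝ (Fin d))
    (hP : ∀ j x, P j x ∈ C j ∧ ∀ y ∈ C j, ‖x - P j x‖ ≤ ‖x - y‖)
    (c : EuclideanSpace ℝ (Fin d)) (hc : ∀ j, c ∈ C j)
    (β : Fin N → ℝ) (hβ0 : ∀ j, 0 ≤ β j) (hβ2 : ∑ k, β k ≤ 2)
    (I : Finset (Fin N)) (hI : I.Nonempty)
    (x : EuclideanSpace ℝ (Fin d)) :
    ‖(x - ∑ j, β j • (x - P j x)) - c‖ ^ 2 ≤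
      ‖x - c‖ ^ 2 -
        (I.inf' hI fun i => 2 * β i * (2 - ∑ k, β k) / (β i + 2 - ∑ k, β k)) *
          (I.sup' hI fun i => (Metric.infDist x (C i)) ^ 2) := by
  classical
  set e : Fin N → EuclideanSpace ℝ (Fin d) := fun j => x - P j x with he
  set r : Fin N → ℝ := fun j => ‖e j‖ with hr
  have hr0 : ∀ j, 0 ≤ r j := fun j => norm_nonneg _
  -- infDist equals ‖e j‖
  have hdist : ∀ j, Metric.infDist x (C j) = r j := by
    intro j
    refine le_antisymm ?_ ?_
    · simpa [dist_eq_norm] using Metric.infDist_le_dist_of_mem (hP j x).1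
    · by_contra hlt
      push_neg at hlt
      obtain ⟨y, hy, hylt⟩ := (Metric.infDist_lt_iff ⟨c, hc j⟩).1 hlt
      rw [dist_eq_norm] at hylt
      exact absurd ((hP j x).2 y hy) (not_le.2 hylt)
  -- obtuse angle property
  have hobtuse : ∀ j, r j ^ 2 ≤ ⟪x - c, e j⟫_ℝ := by
    intro j
    haveI : Nonempty (C j) := ⟨⟨c, hc j⟩⟩
    have heq : ‖x - P j x‖ = ⨅ w : C j, ‖x - w‖ := by
      refine le_antisymm (le_ciInf fun w => (hP j x).2 w w.2) ?_
      exact ciInf_le ⟨0, by rintro _ ⟨w, rfl⟩; exact norm_nonneg _⟩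
        (⟨P j x, (hP j x).1⟩ : C j)
    have hq := ((norm_eq_iInf_iff_real_inner_le_zero (hCconv j) (hP j x).1).1 heq) c (hc j)
    have hx : x - c = e j - (c - P j x) := by simp [he]
    rw [hx, inner_sub_left]
    have : ⟪c - P j x, e j⟫_ℝ = ⟪x - P j x, c - P j x⟫_ℝ := real_inner_comm _ _
    rw [this, real_inner_self_eq_norm_sq]
    linarith
  -- expansion of the square
  set u : EuclideanSpace ℝ (Fin d) := ∑ j, β j • e j with hu
  have hxq : (x - ∑ j, β j • (x - P j x)) - c = (x - c) - u := by
    simp [hu, he]; abel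
  have hexp : ‖(x - c) - u‖ ^ 2 = ‖x - c‖ ^ 2 - 2 * ⟪x - c, u⟫_ℝ + ‖u‖ ^ 2 :=
    norm_sub_sq_real _ _
  have hinner : ⟪x - c, u⟫_ℝ = ∑ j, β j * ⟪x - c, e j⟫_ℝ := by
    rw [hu, inner_sum]
    exact Finset.sum_congr rfl fun j _ => real_inner_smul_right _ _ _
  have hinner_ge : ∑ j, β j * r j ^ 2 ≤ ⟪x - c, u⟫_ℝ := by
    rw [hinner]
    exact Finset.sum_le_sum fun j _ => mul_le_mul_of_nonneg_left (hobtuse j) (hβ0 j)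
  have hnormu : ‖u‖ ≤ ∑ j, β j * r j := by
    refine (norm_sum_le _ _).trans (le_of_eq ?_)
    exact Finset.sum_congr rfl fun j _ => by
      rw [norm_smul, Real.norm_eq_abs, abs_of_nonneg (hβ0 j)]
  have hnormu2 : ‖u‖ ^ 2 ≤ (∑ j, β j * r j) ^ 2 := by
    have h0 : 0 ≤ ∑ j, β j * r j := Finset.sum_nonneg fun j _ => mul_nonneg (hβ0 j) (hr0 j)
    nlinarith [norm_nonneg u]
  -- choose the maximizer
  obtain ⟨i, hiI, hsup⟩ := Finset.exists_mem_eq_sup' hI fun i => (Metric.infDist x (C i)) ^ 2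
  have hsup_eq : (I.sup' hI fun i => (Metric.infDist x (C i)) ^ 2) = r i ^ 2 := by
    rw [hsup, hdist i]
  have hsup_nonneg : 0 ≤ (I.sup' hI fun i => (Metric.infDist x (C i)) ^ 2) := by
    rw [hsup_eq]; positivity
  have hinf_le : (I.inf' hI fun i => 2 * β i * (2 - ∑ k, β k) / (β i + 2 - ∑ k, β k)) ≤
      2 * β i * (2 - ∑ k, β k) / (β i + 2 - ∑ k, β k) := Finset.inf'_le _ hiI
  have hkey := key_scalar β r hβ0 hβ2 hr0 i
  have hfinal : (I.inf' hI fun i => 2 * β i * (2 - ∑ k, β k) / (β i + 2 - ∑ k, β k)) *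
      (I.sup' hI fun i => (Metric.infDist x (C i)) ^ 2) ≤
      2 * ∑ j, β j * r j ^ 2 - (∑ j, β j * r j) ^ 2 := by
    calc _ ≤ (2 * β i * (2 - ∑ k, β k) / (β i + 2 - ∑ k, β k)) *
        (I.sup' hI fun i => (Metric.infDist x (C i)) ^ 2) :=
          mul_le_mul_of_nonneg_right hinf_le hsup_nonneg
      _ = (2 * β i * (2 - ∑ k, β k) / (β i + 2 - ∑ k, β k)) * r i ^ 2 := by rw [hsup_eq]
      _ ≤ _ := hkey
  rw [hxq, hexp]
  linarith
end

section
/- Let C be a nonempty closed convex subset of ℝ^d and (x^{(n)}) a bounded sequence in ℝ^d such that d(x^{(n)}, C) → 0 and ‖x^{(n)} - c‖ is nonincreasing for every c ∈ C. Then (x^{(n)}) converges to a point of C. -/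
/-- A bounded Fejér-monotone sequence whose distance to the nonempty closed
convex set `C` tends to `0` converges to a point of `C`. -/
theorem stmt_9 {d : ℕ}
    (C : Set (EuclideanSpace ℝ (Fin d)))
    (hCne : C.Nonempty) (hCconv : Convex ℝ C) (hCcl : IsClosed C)
    (x : ℕ → EuclideanSpace ℝ (Fin d))
    (hbdd : ∃ R, ∀ n, ‖x n‖ ≤ R)
    (hdist : Filter.Tendsto (fun n => Metric.infDist (x n) C)
      Filter.atTop (nhds 0))
    (hfejer : ∀ c ∈ C, Antitone fun n => ‖x n - c‖) :
    ∃ c ∈ C, Filter.Tendsto x Filter.atTop (nhds c) := by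
  obtain ⟨R, hR⟩ := hbdd
  -- extract convergent subsequence
  have hbdd' : Bornology.IsBounded (Metric.closedBall (0 : EuclideanSpace ℝ (Fin d)) R) :=
    Metric.isBounded_closedBall
  have hmem : ∀ n, x n ∈ Metric.closedBall (0 : EuclideanSpace ℝ (Fin d)) R := by
    intro n
    simpa [Metric.mem_closedBall, dist_eq_norm] using hR n
  obtain ⟨c, _, φ, hφ, hconv⟩ := tendsto_subseq_of_bounded hbdd' hmem
  -- c ∈ C
  have hsub : Filter.Tendsto (fun k => Metric.infDist (x (φ k)) C) Filter.atTop (nhds 0) :=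
    hdist.comp hφ.tendsto_atTop
  have hsub' : Filter.Tendsto (fun k => Metric.infDist (x (φ k)) C) Filter.atTop
      (nhds (Metric.infDist c C)) :=
    ((Metric.continuous_infDist_pt C).continuousAt.tendsto).comp hconv
  have hc0 : Metric.infDist c C = 0 := tendsto_nhds_unique hsub' hsub
  have hcC : c ∈ C := by
    have := hCcl.closure_eq ▸ (Metric.mem_closure_iff_infDist_zero hCne).2 hc0
    simpa [hCcl.closure_eq] using (Metric.mem_closure_iff_infDist_zero hCne).2 hc0
  refine ⟨c, hcC, ?_⟩
  rw [tendsto_iff_norm_sub_tendsto_zero]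
  -- norm along subsequence tends to 0
  have hnsub : Filter.Tendsto (fun k => ‖x (φ k) - c‖) Filter.atTop (nhds 0) := by
    have : Filter.Tendsto (fun k => x (φ k) - c) Filter.atTop (nhds (c - c)) :=
      hconv.sub tendsto_const_nhds
    simpa using this.norm
  have hanti := hfejer c hcC
  rw [Metric.tendsto_atTop]
  intro ε hε
  rw [Metric.tendsto_atTop] at hnsub
  obtain ⟨K, hK⟩ := hnsub ε hε
  refine ⟨φ K, fun n hn => ?_⟩
  have h1 : ‖x n - c‖ ≤ ‖x (φ K) - c‖ := hanti hn
  have h2 := hK K le_rfl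
  have h0 : (0:ℝ) ≤ ‖x n - c‖ := norm_nonneg _
  rw [Real.dist_eq] at h2 ⊢
  have h2' : ‖x (φ K) - c‖ < ε := by
    have := abs_lt.1 h2
    linarith [this.2]
  rw [abs_of_nonneg (by simpa using h0)]
  simpa using lt_of_le_of_lt h1 h2'
end

section
/- Let C₁,…,C_N be closed convex sets in ℝ^d with nonempty intersection C. Let β̃^{(n)} ∈ ℬ be a sequence such that for every m and every x ∈ ℝ^d the sequence Q_{β̃^{(n)}} ∘ ⋯ ∘ Q_{β̃^{(m)}}(x) converges to an element of C as n → ∞. Let β^{(n)} ∈ ℬ satisfy ∑_{n=1}^∞ ∑_{i=1}^N |β_i^{(n)} - β̃_i^{(n)}| < ∞. Then for every x ∈ ℝ^d the sequence Q_{β^{(n)}} ∘ ⋯ ∘ Q_{β^{(1)}}(x) converges to an element of C. -/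
/-!
Each `Q_β` with `β ∈ ℬ` is an average of the identity and the reflections `2 P_j - id`, which
are nonexpansive because metric projections onto convex sets are firmly nonexpansive. Since
`Q_β` fixes a point `c₀ ∈ C`, the perturbed trajectory stays within `‖x⁽⁰⁾ - c₀‖` of `c₀`, where
`‖Q_β y - Q_β̃ y‖ ≤ ∑_j |β_j - β̃_j| ‖x⁽⁰⁾ - c₀‖` is a summable error. The unperturbed scheme
restarted at `x⁽ᵐ⁾` shadows the perturbed trajectory up to the tail of these errors after `m`,
so the perturbed trajectory eventually stays arbitrarily close to points of `C`: it is Cauchy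
and its limit lies in the closed set `C`.
-/

open Filter Topology Finset

section MetricProjection

variable {E : Type*} [NormedAddCommGroup E]

def IsMetricProjection (K : Set E) (p : E → E) : Prop :=
  ∀ x, p x ∈ K ∧ ∀ y ∈ K, ‖x - p x‖ ≤ ‖x - y‖

namespace IsMetricProjection

variable {K : Set E} {p : E → E}

theorem apply_of_mem (hp : IsMetricProjection K p) {y : E} (hy : y ∈ K) : p y = y := by
  have h := (hp y).2 y hy
  rw [sub_self, norm_zero, norm_le_zero_iff, sub_eq_zero] at h
  exact h.symm

variable [InnerProductSpace ℝ E]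

theorem inner_sub_apply_le_zero (hK : Convex ℝ K) (hp : IsMetricProjection K p) (x : E)
    {w : E} (hw : w ∈ K) : inner ℝ (x - p x) (w - p x) ≤ 0 := by
  have : Nonempty K := ⟨⟨p x, (hp x).1⟩⟩
  refine (norm_eq_iInf_iff_real_inner_le_zero hK (hp x).1).1 ?_ w hw
  refine le_antisymm (le_ciInf fun w => (hp x).2 w w.2) ?_
  exact ciInf_le ⟨0, by rintro r ⟨w, rfl⟩; exact norm_nonneg _⟩ (⟨p x, (hp x).1⟩ : K)

theorem norm_sub_sq_le_inner (hK : Convex ℝ K) (hp : IsMetricProjection K p) (y z : E) :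
    ‖p y - p z‖ ^ 2 ≤ inner ℝ (y - z) (p y - p z) := by
  have hy := hp.inner_sub_apply_le_zero hK y (hp z).1
  have hz := hp.inner_sub_apply_le_zero hK z (hp y).1
  have : inner ℝ (y - z) (p y - p z) - ‖p y - p z‖ ^ 2 =
      -inner ℝ (y - p y) (p z - p y) - inner ℝ (z - p z) (p y - p z) := by
    rw [← real_inner_self_eq_norm_sq]
    have h1 : p z - p y = -(p y - p z) := (neg_sub _ _).symm
    rw [h1, inner_neg_right, neg_neg, ← inner_sub_left, ← inner_sub_left]
    congr 1; abel
  linarith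

theorem norm_reflection_sub_le (hK : Convex ℝ K) (hp : IsMetricProjection K p) (y z : E) :
    ‖((2 : ℝ) • p y - y) - ((2 : ℝ) • p z - z)‖ ≤ ‖y - z‖ := by
  have hfirm := hp.norm_sub_sq_le_inner hK y z
  have hsq : ‖((2 : ℝ) • p y - y) - ((2 : ℝ) • p z - z)‖ ^ 2 ≤ ‖y - z‖ ^ 2 := by
    rw [show ((2 : ℝ) • p y - y) - ((2 : ℝ) • p z - z) = (2 : ℝ) • (p y - p z) - (y - z) by
      module, norm_sub_sq_real, norm_smul, real_inner_smul_left, real_inner_comm,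
      Real.norm_two]
    nlinarith
  exact pow_le_pow_iff_left₀ (norm_nonneg _) (norm_nonneg _) two_ne_zero |>.1 hsq

end IsMetricProjection

end MetricProjection

section RelaxedProjection

variable {E ι : Type*} [Fintype ι]

/-- The map `Q_β` of the paper is `relaxedProjection P β`. -/
def relaxedProjection [AddCommGroup E] [Module ℝ E] (P : ι → E → E) (b : ι → ℝ) (y : E) : E :=
  y - ∑ j, b j • (y - P j y)

theorem relaxedProjection_eq_convexCombination [AddCommGroup E] [Module ℝ E] (P : ι → E → E)
    (b : ι → ℝ) (y : E) :
    relaxedProjection P b y =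
      (1 - (∑ j, b j) / 2) • y + ∑ j, (b j / 2) • ((2 : ℝ) • P j y - y) := by
  have : ∀ j, b j • (y - P j y) = (b j / 2) • y - (b j / 2) • ((2 : ℝ) • P j y - y) :=
    fun j => by module
  simp only [relaxedProjection, this, sum_sub_distrib, ← sum_smul, sum_div]
  module

variable [NormedAddCommGroup E] {K : ι → Set E} {P : ι → E → E}

theorem relaxedProjection_apply_of_forall_mem [NormedSpace ℝ E]
    (hP : ∀ j, IsMetricProjection (K j) (P j)) (b : ι → ℝ) {c : E} (hc : ∀ j, c ∈ K j) :
    relaxedProjection P b c = c := by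
  simp [relaxedProjection, (hP _).apply_of_mem (hc _)]

theorem norm_relaxedProjection_sub_relaxedProjection_le [NormedSpace ℝ E]
    (hP : ∀ j, IsMetricProjection (K j) (P j)) (b b' : ι → ℝ) (y : E) {c : E}
    (hc : ∀ j, c ∈ K j) :
    ‖relaxedProjection P b y - relaxedProjection P b' y‖ ≤ (∑ j, |b j - b' j|) * ‖y - c‖ := by
  have : relaxedProjection P b y - relaxedProjection P b' y =
      ∑ j, (b' j - b j) • (y - P j y) := by
    simp only [relaxedProjection, sub_smul, sum_sub_distrib]
    abel
  rw [this, sum_mul]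
  refine (norm_sum_le _ _).trans (sum_le_sum fun j _ => ?_)
  rw [norm_smul, Real.norm_eq_abs, abs_sub_comm]
  exact mul_le_mul_of_nonneg_left ((hP j y).2 c (hc j)) (abs_nonneg _)

theorem norm_relaxedProjection_sub_le [InnerProductSpace ℝ E] (hK : ∀ j, Convex ℝ (K j))
    (hP : ∀ j, IsMetricProjection (K j) (P j)) {b : ι → ℝ} (hb0 : ∀ j, 0 ≤ b j)
    (hb2 : ∑ j, b j ≤ 2) (y z : E) :
    ‖relaxedProjection P b y - relaxedProjection P b z‖ ≤ ‖y - z‖ := by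
  have hsplit : relaxedProjection P b y - relaxedProjection P b z =
      (1 - (∑ j, b j) / 2) • (y - z) +
        ∑ j, (b j / 2) • (((2 : ℝ) • P j y - y) - ((2 : ℝ) • P j z - z)) := by
    simp only [relaxedProjection_eq_convexCombination, smul_sub, sum_sub_distrib]
    abel
  have hrefl : ∑ j, ‖(b j / 2) • (((2 : ℝ) • P j y - y) - ((2 : ℝ) • P j z - z))‖ ≤
      ∑ j, b j / 2 * ‖y - z‖ := sum_le_sum fun j _ => by
    rw [norm_smul, Real.norm_of_nonneg (by linarith [hb0 j])]
    exact mul_le_mul_of_nonneg_left ((hP j).norm_reflection_sub_le (hK j) y z)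
      (by linarith [hb0 j])
  calc ‖relaxedProjection P b y - relaxedProjection P b z‖
      ≤ (1 - (∑ j, b j) / 2) * ‖y - z‖ + ∑ j, b j / 2 * ‖y - z‖ := by
        rw [hsplit]
        refine (norm_add_le _ _).trans (add_le_add ?_ ((norm_sum_le _ _).trans hrefl))
        rw [norm_smul, Real.norm_of_nonneg (by linarith)]
    _ = ‖y - z‖ := by rw [← sum_mul, ← sum_div]; ring

end RelaxedProjection

section Perturbation

variable {X : Type*}

def iterateFrom (T : ℕ → X → X) (m : ℕ) (y : X) : ℕ → X
  | 0 => y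
  | n + 1 => if m ≤ n then T n (iterateFrom T m y n) else y

theorem iterateFrom_of_le (T : ℕ → X → X) (y : X) {m n : ℕ} (h : n ≤ m) :
    iterateFrom T m y n = y := by
  cases n with
  | zero => rfl
  | succ n => exact if_neg (by omega)

theorem iterateFrom_succ (T : ℕ → X → X) (y : X) {m n : ℕ} (h : m ≤ n) :
    iterateFrom T m y (n + 1) = T n (iterateFrom T m y n) :=
  if_pos h

variable [PseudoMetricSpace X]

theorem dist_iterateFrom_le {T S : ℕ → X → X} {x : ℕ → X} {e : ℕ → ℝ}
    (hx : ∀ n, x (n + 1) = T n (x n)) (hS : ∀ n y z, dist (S n y) (S n z) ≤ dist y z)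
    (he : ∀ n, dist (T n (x n)) (S n (x n)) ≤ e n) {m n : ℕ} (hmn : m ≤ n) :
    dist (x n) (iterateFrom S m (x m) n) ≤ ∑ k ∈ Ico m n, e k := by
  induction n, hmn using Nat.le_induction with
  | base => simp [iterateFrom_of_le]
  | succ n hmn ih =>
    rw [hx, iterateFrom_succ _ _ hmn, sum_Ico_succ_top hmn]
    calc dist (T n (x n)) (S n (iterateFrom S m (x m) n))
        ≤ dist (T n (x n)) (S n (x n)) + dist (S n (x n)) (S n (iterateFrom S m (x m) n)) :=
          dist_triangle _ _ _
      _ ≤ e n + ∑ k ∈ Ico m n, e k := add_le_add (he n) ((hS n _ _).trans ih)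
      _ = _ := add_comm _ _

theorem exists_tendsto_of_forall_eventually_dist_le [CompleteSpace X] {S : Set X}
    (hS : IsClosed S) {x : ℕ → X} (h : ∀ ε > 0, ∃ c ∈ S, ∀ᶠ n in atTop, dist (x n) c ≤ ε) :
    ∃ c ∈ S, Tendsto x atTop (𝓝 c) := by
  have hx : CauchySeq x := by
    refine Metric.cauchySeq_iff'.2 fun ε hε => ?_
    obtain ⟨c, -, hc⟩ := h (ε / 3) (by positivity)
    obtain ⟨N, hN⟩ := eventually_atTop.1 hc
    refine ⟨N, fun n hn => (dist_triangle_right _ _ c).trans_lt ?_⟩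
    linarith [hN n hn, hN N le_rfl]
  obtain ⟨L, hL⟩ := cauchySeq_tendsto_of_complete hx
  refine ⟨L, hS.closure_subset (Metric.mem_closure_iff.2 fun ε hε => ?_), hL⟩
  obtain ⟨c, hcS, hc⟩ := h (ε / 2) (by positivity)
  have : dist L c ≤ ε / 2 := le_of_tendsto (hL.dist tendsto_const_nhds) hc
  exact ⟨c, hcS, by linarith⟩

theorem exists_tendsto_of_summable_perturbation [CompleteSpace X] {S : Set X}
    (hS : IsClosed S) {T T' : ℕ → X → X}
    (hconv : ∀ (m : ℕ) (u : ℕ → X), (∀ n, m ≤ n → u (n + 1) = T' n (u n)) →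
      ∃ c ∈ S, Tendsto u atTop (𝓝 c))
    (hT' : ∀ n y z, dist (T' n y) (T' n z) ≤ dist y z)
    {x : ℕ → X} (hx : ∀ n, x (n + 1) = T n (x n)) {e : ℕ → ℝ}
    (he : ∀ n, dist (T n (x n)) (T' n (x n)) ≤ e n) (he0 : ∀ n, 0 ≤ e n)
    (hsum : Summable e) : ∃ c ∈ S, Tendsto x atTop (𝓝 c) := by
  refine exists_tendsto_of_forall_eventually_dist_le hS fun ε hε => ?_
  obtain ⟨m, hm⟩ := ((tendsto_sum_nat_add e).eventually (gt_mem_nhds (half_pos hε))).exists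
  set u := iterateFrom T' m (x m)
  obtain ⟨c, hcS, hc⟩ := hconv m u fun n hn => iterateFrom_succ _ _ hn
  refine ⟨c, hcS, ?_⟩
  filter_upwards [eventually_ge_atTop m, hc.eventually (Metric.closedBall_mem_nhds c (half_pos hε))]
    with n hmn hn
  have htail : ∑ k ∈ Ico m n, e k ≤ ∑' k, e (k + m) := by
    rw [sum_Ico_eq_sum_range]
    simp only [add_comm m]
    exact ((summable_nat_add_iff m).2 hsum).sum_le_tsum _ fun k _ => he0 _
  calc dist (x n) c ≤ dist (x n) (u n) + dist (u n) c := dist_triangle _ _ _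
    _ ≤ ∑' k, e (k + m) + ε / 2 :=
        add_le_add ((dist_iterateFrom_le hx hT' he hmn).trans htail) hn
    _ ≤ ε := by linarith

end Perturbation

/-- Proposition 2 (perturbation): if every tail trajectory of the unperturbed
scheme `β̃^{(n)}` converges to a point of `C = ⋂ C_j`, and
`∑_n ∑_i |β_i^{(n)} - β̃_i^{(n)}| < ∞`, then every trajectory of the perturbed
scheme `β^{(n)}` converges to a point of `C`. -/
theorem stmt_11 {d N : ℕ}
    (C : Fin N → Set (EuclideanSpace ℝ (Fin d)))
    (hCconv : ∀ j, Convex ℝ (C j)) (hCcl : ∀ j, IsClosed (C j))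
    (hne : (⋂ j, C j).Nonempty)
    (P : Fin N → EuclideanSpace ℝ (Fin d) → EuclideanSpace ℝ (Fin d))
    (hP : ∀ j x, P j x ∈ C j ∧ ∀ y ∈ C j, ‖x - P j x‖ ≤ ‖x - y‖)
    (βt : ℕ → Fin N → ℝ)
    (hβt0 : ∀ n j, 0 ≤ βt n j) (hβt2 : ∀ n, ∑ j, βt n j ≤ 2)
    (hconv : ∀ (m : ℕ) (u : ℕ → EuclideanSpace ℝ (Fin d)),
      (∀ n, m ≤ n → u (n + 1) = u n - ∑ j, βt (n + 1) j • (u n - P j (u n))) →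
      ∃ c ∈ ⋂ j, C j, Filter.Tendsto u Filter.atTop (nhds c))
    (β : ℕ → Fin N → ℝ)
    (hβ0 : ∀ n j, 0 ≤ β n j) (hβ2 : ∀ n, ∑ j, β n j ≤ 2)
    (hsum : Summable fun n => ∑ i, |β n i - βt n i|)
    (x : ℕ → EuclideanSpace ℝ (Fin d))
    (hx : ∀ n, x (n + 1) = x n - ∑ j, β (n + 1) j • (x n - P j (x n))) :
    ∃ c ∈ ⋂ j, C j, Filter.Tendsto x Filter.atTop (nhds c) := by
  obtain ⟨c₀, hc₀⟩ := hne
  have hc₀C : ∀ j, c₀ ∈ C j := Set.mem_iInter.1 hc₀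
  have hbdd : ∀ n, ‖x n - c₀‖ ≤ ‖x 0 - c₀‖ := by
    intro n
    induction n with
    | zero => exact le_rfl
    | succ n ih =>
      calc ‖x (n + 1) - c₀‖
          = ‖relaxedProjection P (β (n + 1)) (x n) - relaxedProjection P (β (n + 1)) c₀‖ := by
            rw [relaxedProjection_apply_of_forall_mem hP _ hc₀C, hx n, relaxedProjection]
        _ ≤ ‖x 0 - c₀‖ := (norm_relaxedProjection_sub_le hCconv hP (hβ0 _) (hβ2 _) _ _).trans ih
  refine exists_tendsto_of_summable_perturbation (isClosed_iInter hCcl)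
    (T := fun n => relaxedProjection P (β (n + 1)))
    (T' := fun n => relaxedProjection P (βt (n + 1)))
    (e := fun n => (∑ i, |β (n + 1) i - βt (n + 1) i|) * ‖x 0 - c₀‖) hconv
    (fun n y z => by
      simpa only [dist_eq_norm] using norm_relaxedProjection_sub_le hCconv hP (hβt0 _) (hβt2 _) y z)
    hx (fun n => ?_) (fun n => by positivity) (((summable_nat_add_iff 1).2 hsum).mul_right _)
  rw [dist_eq_norm]
  exact (norm_relaxedProjection_sub_relaxedProjection_le hP _ _ _ hc₀C).trans
    (mul_le_mul_of_nonneg_left (hbdd n) (sum_nonneg fun _ _ => abs_nonneg _))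
end

section
/- Let C₁,…,C_N be closed convex sets in ℝ^d with nonempty intersection C, and let β^{(n)} ∈ ℬ. Define x^{(n)} = Q_{β^{(n)}}(x^{(n-1)}). Then for any c ∈ C and any n, with ν_i^{(m)} = 2β_i^{(m)}(2 - ∑_k β_k^{(m)})/(β_i^{(m)} + 2 - ∑_k β_k^{(m)}) and I^{(m)} = {i : β_i^{(m)} > 0}: ‖x^{(n)} - c‖² ≤ ‖x^{(0)} - c‖² - ∑_{m=1}^n (min_{i∈I^{(m)}} ν_i^{(m)}) · (max_{i∈I^{(m)}} d(x^{(m-1)}, C_i)²), whenever all I^{(m)} are nonempty. -/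
/-!
Write `eⱼ = x - Pⱼ x` and `v = ∑ⱼ βⱼ eⱼ`, so that one step maps `x` to `x - v`. For `c ∈ ⋂ Cⱼ`
the obtuse-angle characterisation of the projection gives `‖eⱼ‖² ≤ ⟪eⱼ, x - c⟫`, hence the step
decreases `‖x - c‖²` by `2⟪x - c, v⟫ - ‖v‖² ≥ 2 ∑ⱼ βⱼ ‖eⱼ‖² - ‖v‖²`. Splitting off one active
index `i`, the rest `w` of `v` satisfies `‖w‖² ≤ s ∑_{j ≠ i} βⱼ ‖eⱼ‖²` with `s = ∑_{j ≠ i} βⱼ`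
(Cauchy–Schwarz), and a weighted Young inequality for `‖βᵢ eᵢ + w‖²` with weights tuned to `s`
leaves a decrease of at least `νᵢ ‖eᵢ‖²`. Choosing for `i` an active index of largest distance
`‖eᵢ‖ = d(x, Cᵢ)` and summing along the trajectory gives the estimate.
-/

open Finset
open scoped InnerProductSpace

/-- The paper's `νᵢ` for the weights `b`. -/
noncomputable def descentCoeff {ι : Type*} [Fintype ι] (b : ι → ℝ) (i : ι) : ℝ :=
  2 * b i * (2 - ∑ k, b k) / (b i + 2 - ∑ k, b k)

lemma infDist_eq_norm_sub_of_isMinimizer {E : Type*} [NormedAddCommGroup E] {K : Set E}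
    {x p : E} (hp : p ∈ K) (hmin : ∀ y ∈ K, ‖x - p‖ ≤ ‖x - y‖) :
    Metric.infDist x K = ‖x - p‖ := by
  refine le_antisymm (by simpa [dist_eq_norm] using Metric.infDist_le_dist_of_mem hp) ?_
  exact (Metric.le_infDist ⟨p, hp⟩).mpr fun y hy => by simpa [dist_eq_norm] using hmin y hy

lemma mul_sq_add_le_of_sq_le_mul {a w s p t : ℝ} (hs : 0 ≤ s) (hp : 0 ≤ p) (ht : 0 ≤ t)
    (hsp : s + p = 2) (hw : w ^ 2 ≤ s * t) :
    p * (a + w) ^ 2 ≤ 2 * a ^ 2 + 2 * p * t := by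
  rcases hs.eq_or_lt with rfl | hs
  · have : w = 0 := by nlinarith
    subst this
    nlinarith
  · have hgap : s * (2 * a ^ 2 + 2 * p * t) - s * (p * (a + w) ^ 2)
        = (s * a - p * w) ^ 2 + 2 * p * (s * t - w ^ 2) := by
      obtain rfl : p = 2 - s := by linarith
      ring
    refine le_of_mul_le_mul_left ?_ hs
    linarith [sq_nonneg (s * a - p * w), mul_nonneg hp (sub_nonneg.mpr hw)]

section

variable {E : Type*} [NormedAddCommGroup E] [InnerProductSpace ℝ E]

lemma sq_norm_sub_le_inner_of_isMinimizer {K : Set E} (hK : Convex ℝ K) {x p c : E}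
    (hp : p ∈ K) (hmin : ∀ y ∈ K, ‖x - p‖ ≤ ‖x - y‖) (hc : c ∈ K) :
    ‖x - p‖ ^ 2 ≤ ⟪x - p, x - c⟫_ℝ := by
  have : Nonempty K := ⟨⟨p, hp⟩⟩
  have hbdd : BddBelow (Set.range fun y : K => ‖x - y‖) := ⟨0, by rintro _ ⟨y, rfl⟩; positivity⟩
  have hinf : ‖x - p‖ = ⨅ y : K, ‖x - y‖ :=
    le_antisymm (le_ciInf fun y => hmin y y.2) (ciInf_le hbdd ⟨p, hp⟩)
  have hobtuse := (norm_eq_iInf_iff_real_inner_le_zero hK hp).mp hinf c hc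
  have hsplit : x - c = (x - p) - (c - p) := by abel
  rw [hsplit, inner_sub_right, real_inner_self_eq_norm_sq]
  linarith

lemma sq_norm_sum_smul_le {ι : Type*} (s : Finset ι) {b : ι → ℝ} (hb : ∀ j ∈ s, 0 ≤ b j)
    (e : ι → E) :
    ‖∑ j ∈ s, b j • e j‖ ^ 2 ≤ (∑ j ∈ s, b j) * ∑ j ∈ s, b j * ‖e j‖ ^ 2 := by
  have htriangle : ‖∑ j ∈ s, b j • e j‖ ≤ ∑ j ∈ s, b j * ‖e j‖ :=
    (norm_sum_le _ _).trans_eq <| sum_congr rfl fun j hj => by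
      rw [norm_smul, Real.norm_of_nonneg (hb j hj)]
  calc ‖∑ j ∈ s, b j • e j‖ ^ 2 ≤ (∑ j ∈ s, b j * ‖e j‖) ^ 2 := by gcongr
    _ ≤ _ := sum_sq_le_sum_mul_sum_of_sq_le_mul s hb
          (fun j hj => mul_nonneg (hb j hj) (sq_nonneg _)) fun j _ => le_of_eq (by ring)

lemma sq_norm_sub_sum_smul_le {ι : Type*} [Fintype ι] (u : E) (e : ι → E)
    (he : ∀ j, ‖e j‖ ^ 2 ≤ ⟪e j, u⟫_ℝ) {b : ι → ℝ} (hb0 : ∀ j, 0 ≤ b j) (hb2 : ∑ j, b j ≤ 2)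
    {i : ι} (hi : 0 < b i) :
    ‖u - ∑ j, b j • e j‖ ^ 2 ≤ ‖u‖ ^ 2 - descentCoeff b i * ‖e i‖ ^ 2 := by
  classical
  set v := ∑ j, b j • e j
  set w := ∑ j ∈ univ.erase i, b j • e j
  set s := ∑ j ∈ univ.erase i, b j
  set T := ∑ j ∈ univ.erase i, b j * ‖e j‖ ^ 2
  have hsum : ∑ j, b j = b i + s := (add_sum_erase _ _ (mem_univ i)).symm
  have hs : 0 ≤ s := sum_nonneg fun j _ => hb0 j
  have hT : 0 ≤ T := sum_nonneg fun j _ => mul_nonneg (hb0 j) (sq_nonneg _)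
  have hinner : b i * ‖e i‖ ^ 2 + T ≤ ⟪u, v⟫_ℝ := calc
    b i * ‖e i‖ ^ 2 + T = ∑ j, b j * ‖e j‖ ^ 2 :=
      add_sum_erase univ (fun j => b j * ‖e j‖ ^ 2) (mem_univ i)
    _ ≤ ∑ j, b j * ⟪e j, u⟫_ℝ := sum_le_sum fun j _ => mul_le_mul_of_nonneg_left (he j) (hb0 j)
    _ = ⟪u, v⟫_ℝ := by simp only [v, inner_sum, real_inner_smul_right, real_inner_comm]
  have hnorm : ‖v‖ ≤ b i * ‖e i‖ + ‖w‖ := calc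
    ‖v‖ = ‖b i • e i + w‖ :=
      congrArg norm (add_sum_erase univ (fun j => b j • e j) (mem_univ i)).symm
    _ ≤ b i * ‖e i‖ + ‖w‖ := by
      grw [norm_add_le, norm_smul, Real.norm_of_nonneg hi.le]
  have hp : 0 < b i + 2 - ∑ j, b j := by linarith
  have hgap : (b i + 2 - ∑ j, b j) * ‖v‖ ^ 2 ≤ 2 * (b i * ‖e i‖) ^ 2 + 2 * (2 - s) * T := by
    rw [hsum, add_sub_add_left_eq_sub]
    calc (2 - s) * ‖v‖ ^ 2 ≤ (2 - s) * (b i * ‖e i‖ + ‖w‖) ^ 2 := by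
          gcongr
          linarith
      _ ≤ _ := mul_sq_add_le_of_sq_le_mul hs (by linarith) hT (by ring)
          (sq_norm_sum_smul_le _ (fun j _ => hb0 j) e)
  have hcoeff : descentCoeff b i * (b i + 2 - ∑ j, b j) = 2 * b i * (2 - ∑ j, b j) := by
    rw [descentCoeff, div_mul_cancel₀ _ hp.ne']
  have hexpand : ‖u - v‖ ^ 2 = ‖u‖ ^ 2 - 2 * ⟪u, v⟫_ℝ + ‖v‖ ^ 2 := norm_sub_sq_real u v
  rw [hexpand]
  refine le_of_mul_le_mul_left ?_ hp
  rw [hsum] at hgap hcoeff ⊢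
  nlinarith

lemma sq_norm_relaxedProjection_sub_le {ι : Type*} [Fintype ι] {C : ι → Set E}
    (hC : ∀ j, Convex ℝ (C j)) {P : ι → E → E}
    (hP : ∀ j x, P j x ∈ C j ∧ ∀ y ∈ C j, ‖x - P j x‖ ≤ ‖x - y‖) {c : E} (hc : ∀ j, c ∈ C j)
    {b : ι → ℝ} (hb0 : ∀ j, 0 ≤ b j) (hb2 : ∑ j, b j ≤ 2)
    (hI : (univ.filter fun i => 0 < b i).Nonempty) (x : E) :
    ‖x - ∑ j, b j • (x - P j x) - c‖ ^ 2 ≤ ‖x - c‖ ^ 2 -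
      (univ.filter fun i => 0 < b i).inf' hI (fun i => descentCoeff b i) *
        (univ.filter fun i => 0 < b i).sup' hI (fun i => Metric.infDist x (C i) ^ 2) := by
  obtain ⟨i, hi, hmax⟩ := exists_mem_eq_sup' hI fun i => Metric.infDist x (C i) ^ 2
  have hstep := sq_norm_sub_sum_smul_le (x - c) (fun j => x - P j x)
    (fun j => sq_norm_sub_le_inner_of_isMinimizer (hC j) (hP j x).1 (hP j x).2 (hc j))
    hb0 hb2 (mem_filter.mp hi).2
  rw [hmax, infDist_eq_norm_sub_of_isMinimizer (hP i x).1 (hP i x).2, sub_right_comm]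
  have hmin := inf'_le (fun i => descentCoeff b i) hi
  have := mul_le_mul_of_nonneg_right hmin (sq_nonneg ‖x - P i x‖)
  linarith

end

theorem stmt_19_general {d N : ℕ}
    (C : Fin N → Set (EuclideanSpace ℝ (Fin d)))
    (hCconv : ∀ j, Convex ℝ (C j))
    (P : Fin N → EuclideanSpace ℝ (Fin d) → EuclideanSpace ℝ (Fin d))
    (hP : ∀ j x, P j x ∈ C j ∧ ∀ y ∈ C j, ‖x - P j x‖ ≤ ‖x - y‖)
    (c : EuclideanSpace ℝ (Fin d)) (hc : ∀ j, c ∈ C j)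
    (β : ℕ → Fin N → ℝ) (hβ0 : ∀ m j, 0 ≤ β m j) (hβ2 : ∀ m, ∑ j, β m j ≤ 2)
    (hI : ∀ m, (Finset.univ.filter fun i => 0 < β m i).Nonempty)
    (x : ℕ → EuclideanSpace ℝ (Fin d))
    (hx : ∀ n, x (n + 1) = x n - ∑ j, β (n + 1) j • (x n - P j (x n)))
    (n : ℕ) :
    ‖x n - c‖ ^ 2 ≤ ‖x 0 - c‖ ^ 2 -
      ∑ m ∈ Finset.Icc 1 n,
        ((Finset.univ.filter fun i => 0 < β m i).inf' (hI m)
            (fun i => 2 * β m i * (2 - ∑ k, β m k) / (β m i + 2 - ∑ k, β m k))) *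
          ((Finset.univ.filter fun i => 0 < β m i).sup' (hI m)
            (fun i => (Metric.infDist (x (m - 1)) (C i)) ^ 2)) := by
  induction n with
  | zero => simp
  | succ n ih =>
    have hstep := sq_norm_relaxedProjection_sub_le hCconv hP hc (hβ0 (n + 1)) (hβ2 (n + 1))
      (hI (n + 1)) (x n)
    rw [← hx n] at hstep
    unfold descentCoeff at hstep
    rw [sum_Icc_succ_top (Nat.le_add_left 1 n), Nat.add_sub_cancel]
    linarith

/-- The iterated one-step estimate along the trajectory:
`‖x^{(n)} - c‖² ≤ ‖x^{(0)} - c‖²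
  - ∑_{m=1}^n (min_{i ∈ I^{(m)}} ν_i^{(m)}) (max_{i ∈ I^{(m)}} d(x^{(m-1)},C_i)²)`,
where `I^{(m)} = {i : β_i^{(m)} > 0}` is assumed nonempty. -/
theorem stmt_19 {d N : ℕ}
    (C : Fin N → Set (EuclideanSpace ℝ (Fin d)))
    (hCconv : ∀ j, Convex ℝ (C j)) (hCcl : ∀ j, IsClosed (C j))
    (P : Fin N → EuclideanSpace ℝ (Fin d) → EuclideanSpace ℝ (Fin d))
    (hP : ∀ j x, P j x ∈ C j ∧ ∀ y ∈ C j, ‖x - P j x‖ ≤ ‖x - y‖)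
    (c : EuclideanSpace ℝ (Fin d)) (hc : ∀ j, c ∈ C j)
    (β : ℕ → Fin N → ℝ) (hβ0 : ∀ m j, 0 ≤ β m j) (hβ2 : ∀ m, ∑ j, β m j ≤ 2)
    (hI : ∀ m, (Finset.univ.filter fun i => 0 < β m i).Nonempty)
    (x : ℕ → EuclideanSpace ℝ (Fin d))
    (hx : ∀ n, x (n + 1) = x n - ∑ j, β (n + 1) j • (x n - P j (x n)))
    (n : ℕ) :
    ‖x n - c‖ ^ 2 ≤ ‖x 0 - c‖ ^ 2 -
      ∑ m ∈ Finset.Icc 1 n,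
        ((Finset.univ.filter fun i => 0 < β m i).inf' (hI m)
            (fun i => 2 * β m i * (2 - ∑ k, β m k) / (β m i + 2 - ∑ k, β m k))) *
          ((Finset.univ.filter fun i => 0 < β m i).sup' (hI m)
            (fun i => (Metric.infDist (x (m - 1)) (C i)) ^ 2)) :=
  stmt_19_general C hCconv P hP c hc β hβ0 hβ2 hI x hx n
end
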